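/- Let H be a Banach space, S(t) bounded linear operators and T(t) maps on H satisfying: (i) ‖S(t)w‖ ≤ e^(αt)‖w‖ for all t ≥ 0; (ii) ‖T(t₀)w − S(t₀)w‖ ≤ b₀‖w‖² for a fixed t₀ > 0 and b₀ > 0, for all w with trajectory bounded appropriately; (iii) ‖T(t)w‖ ≤ e^(αt)‖w‖; (iv) S(s+t) = S(s)S(t) and T(s+t) = T(s)T(t). Then for v(t) := T(t)v₀ and every n ∈ ℕ: ‖v(nt₀) − S(nt₀)v₀‖ ≤ b₀ ‖v₀‖² e^(αt₀(n−1)) (e^(αnt₀)−1)/(e^(αt₀)−1). -/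
import Mathlib


open Real

theorem telescoping_estimate {H : Type*} [NormedAddCommGroup H] [NormedSpace ℝ H]
    [CompleteSpace H]
    (α t₀ b₀ : ℝ) (hα : 0 < α) (ht₀ : 0 < t₀) (hb₀ : 0 < b₀)
    (S : ℝ → H →L[ℝ] H) (T : ℝ → H → H)
    (hS0 : S 0 = ContinuousLinearMap.id ℝ H) (hT0 : T 0 = id)
    (hSsemi : ∀ s t : ℝ, 0 ≤ s → 0 ≤ t → ∀ w, S (s + t) w = S s (S t w))
    (hTsemi : ∀ s t : ℝ, 0 ≤ s → 0 ≤ t → ∀ w, T (s + t) w = T s (T t w))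
    (hSbound : ∀ t : ℝ, 0 ≤ t → ∀ w : H, ‖S t w‖ ≤ Real.exp (α * t) * ‖w‖)
    (hTbound : ∀ t : ℝ, 0 ≤ t → ∀ w : H, ‖T t w‖ ≤ Real.exp (α * t) * ‖w‖)
    (hdiff : ∀ w : H, ‖T t₀ w - S t₀ w‖ ≤ b₀ * ‖w‖ ^ 2)
    (v₀ : H) (n : ℕ) :
    ‖T (n * t₀) v₀ - S (n * t₀) v₀‖ ≤
      b₀ * ‖v₀‖ ^ 2 * Real.exp (α * t₀ * (n - 1)) *
        (Real.exp (α * n * t₀) - 1) / (Real.exp (α * t₀) - 1) := by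
  set E := Real.exp (α * t₀) with hE
  have hE1 : 1 < E := by
    rw [hE]
    exact Real.one_lt_exp_iff.mpr (mul_pos hα ht₀)
  have hEpos : 0 < E := lt_trans one_pos hE1
  have hEne : E - 1 ≠ 0 := by linarith
  have hexpn : ∀ m : ℕ, Real.exp (α * (m * t₀)) = E ^ m := by
    intro m
    rw [hE, ← Real.exp_nat_mul]
    ring_nf
  -- main claim by induction
  have key : ∀ m : ℕ, ‖T (m * t₀) v₀ - S (m * t₀) v₀‖ ≤
      b₀ * ‖v₀‖ ^ 2 * E ^ m * (E ^ m - 1) / (E * (E - 1)) := by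
    intro m
    induction m with
    | zero =>
      simp [hT0, hS0]
    | succ n ih =>
      have hnt : (0:ℝ) ≤ n * t₀ := by positivity
      have hsplit : ((n + 1 : ℕ) : ℝ) * t₀ = t₀ + n * t₀ := by push_cast; ring
      set x := T ((n:ℝ) * t₀) v₀ with hx
      set y := S ((n:ℝ) * t₀) v₀ with hy
      have hTs : T (((n + 1 : ℕ) : ℝ) * t₀) v₀ = T t₀ x := by
        rw [hsplit, hTsemi t₀ _ (le_of_lt ht₀) hnt]
      have hSs : S (((n + 1 : ℕ) : ℝ) * t₀) v₀ = S t₀ y := by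
        rw [hsplit, hSsemi t₀ _ (le_of_lt ht₀) hnt]
      have hxn : ‖x‖ ≤ E ^ n * ‖v₀‖ := by
        have := hTbound ((n:ℝ) * t₀) hnt v₀
        rwa [hexpn n] at this
      have hdec : T t₀ x - S t₀ y = (T t₀ x - S t₀ x) + S t₀ (x - y) := by
        rw [map_sub]; abel
      have h1 : ‖T t₀ x - S t₀ x‖ ≤ b₀ * ‖x‖ ^ 2 := hdiff x
      have h2 : ‖S t₀ (x - y)‖ ≤ E * ‖x - y‖ := by
        simpa [hE] using hSbound t₀ (le_of_lt ht₀) (x - y)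
      have hxsq : b₀ * ‖x‖ ^ 2 ≤ b₀ * (E ^ n * ‖v₀‖) ^ 2 := by
        have h0 : (0:ℝ) ≤ ‖x‖ := norm_nonneg _
        have := pow_le_pow_left₀ h0 hxn 2
        nlinarith
      have hstep : ‖T (((n + 1 : ℕ) : ℝ) * t₀) v₀ - S (((n + 1 : ℕ) : ℝ) * t₀) v₀‖ ≤
          b₀ * (E ^ n * ‖v₀‖) ^ 2 + E * ‖x - y‖ := by
        rw [hTs, hSs, hdec]
        calc ‖(T t₀ x - S t₀ x) + S t₀ (x - y)‖
            ≤ ‖T t₀ x - S t₀ x‖ + ‖S t₀ (x - y)‖ := norm_add_le _ _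
          _ ≤ b₀ * (E ^ n * ‖v₀‖) ^ 2 + E * ‖x - y‖ := by
              have := le_trans h1 hxsq; linarith
      have hEmul : E * ‖x - y‖ ≤ E * (b₀ * ‖v₀‖ ^ 2 * E ^ n * (E ^ n - 1) / (E * (E - 1))) :=
        mul_le_mul_of_nonneg_left ih (le_of_lt hEpos)
      have heq : b₀ * (E ^ n * ‖v₀‖) ^ 2 +
          E * (b₀ * ‖v₀‖ ^ 2 * E ^ n * (E ^ n - 1) / (E * (E - 1))) =
          b₀ * ‖v₀‖ ^ 2 * E ^ (n + 1) * (E ^ (n + 1) - 1) / (E * (E - 1)) := by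
        field_simp
        ring
      calc ‖T (((n + 1 : ℕ) : ℝ) * t₀) v₀ - S (((n + 1 : ℕ) : ℝ) * t₀) v₀‖
          ≤ b₀ * (E ^ n * ‖v₀‖) ^ 2 + E * ‖x - y‖ := hstep
        _ ≤ b₀ * (E ^ n * ‖v₀‖) ^ 2 +
            E * (b₀ * ‖v₀‖ ^ 2 * E ^ n * (E ^ n - 1) / (E * (E - 1))) := by linarith
        _ = b₀ * ‖v₀‖ ^ 2 * E ^ (n + 1) * (E ^ (n + 1) - 1) / (E * (E - 1)) := heq
  -- convert to stated form
  have hrw1 : Real.exp (α * t₀ * ((n:ℝ) - 1)) = E ^ n / E := by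
    rw [show α * t₀ * ((n:ℝ) - 1) = α * ((n:ℝ) * t₀) - α * t₀ by ring, Real.exp_sub,
      hexpn n, hE]
  have hrw2 : Real.exp (α * (n:ℝ) * t₀) = E ^ n := by
    rw [show α * (n:ℝ) * t₀ = α * ((n:ℝ) * t₀) by ring, hexpn n]
  rw [hrw1, hrw2]
  calc ‖T ((n:ℝ) * t₀) v₀ - S ((n:ℝ) * t₀) v₀‖
      ≤ b₀ * ‖v₀‖ ^ 2 * E ^ n * (E ^ n - 1) / (E * (E - 1)) := key n
    _ = b₀ * ‖v₀‖ ^ 2 * (E ^ n / E) * (E ^ n - 1) / (E - 1) := by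
        field_simp
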